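/- arXiv:1105.3521 — 8 statements merged into one kernel-verified Lean document; each statement's English description precedes it below -/
import Mathlib

section
/- Let (X,Y) be a torsion pair in a triangulated category C. Then the subcategory I(X) of Ext-injective objects of X equals X ∩ Y[-1], and the subcategory P(Y) of Ext-projective objects of Y equals I(X)[1] = X[1] ∩ Y. -/
open CategoryTheory CategoryTheory.Limits CategoryTheory.Pretriangulated

variable {C : Type*} [Category C] [Preadditive C] [HasZeroObject C]
  [HasShift C ℤ] [∀ n : ℤ, (shiftFunctor C n).Additive] [Pretriangulated C]

/-- `Hom(𝒳, 𝒴) = 0`. -/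
def homZero (𝒳 𝒴 : Set C) : Prop :=
  ∀ ⦃A B : C⦄, A ∈ 𝒳 → B ∈ 𝒴 → ∀ f : A ⟶ B, f = 0

/-- The shift `𝒳[n]` of a subcategory (closed under isomorphisms). -/
def shiftSet (𝒳 : Set C) (n : ℤ) : Set C :=
  {Z | ∃ A ∈ 𝒳, Nonempty ((A⟦n⟧) ≅ Z)}

/-- The class `𝒳 * 𝒴` of extensions. -/
def extClass (𝒳 𝒴 : Set C) : Set C :=
  {Z | ∃ (A B : C) (f : A ⟶ Z) (g : Z ⟶ B) (h : B ⟶ A⟦(1:ℤ)⟧),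
      A ∈ 𝒳 ∧ B ∈ 𝒴 ∧ Triangle.mk f g h ∈ distTriang C}

/-- A torsion pair: `Hom(𝒳,𝒴) = 0` and `C = 𝒳 * 𝒴`. -/
def IsTorsionPair (𝒳 𝒴 : Set C) : Prop :=
  homZero 𝒳 𝒴 ∧ ∀ Z : C, Z ∈ extClass 𝒳 𝒴

/-- A cotorsion pair: `Hom(𝒳,𝒲[1]) = 0` and `C = 𝒳 * 𝒲[1]`. -/
def IsCotorsionPair (𝒳 𝒲 : Set C) : Prop :=
  IsTorsionPair 𝒳 (shiftSet 𝒲 (1:ℤ))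

/-- Full subcategory closed under isomorphisms, finite direct sums and direct summands. -/
structure IsSubcat (𝒳 : Set C) : Prop where
  mem_of_iso : ∀ ⦃A B : C⦄, (A ≅ B) → A ∈ 𝒳 → B ∈ 𝒳
  biprod_mem : ∀ ⦃A B : C⦄, A ∈ 𝒳 → B ∈ 𝒳 → (A ⊞ B) ∈ 𝒳
  mem_of_biprod : ∀ ⦃A B : C⦄, (A ⊞ B) ∈ 𝒳 → A ∈ 𝒳 ∧ B ∈ 𝒳

/-- `⊥(𝒟[1]) = {M : Hom(M, 𝒟[1]) = 0}`. -/
def leftPerpShift (𝒟 : Set C) : Set C :=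
  {M : C | ∀ D ∈ 𝒟, ∀ f : M ⟶ (D⟦(1:ℤ)⟧), f = 0}

/-- `(𝒟[-1])⊥ = {M : Hom(𝒟[-1], M) = 0}`. -/
def shiftRightPerp (𝒟 : Set C) : Set C :=
  {M : C | ∀ D ∈ 𝒟, ∀ f : (D⟦(-1:ℤ)⟧) ⟶ M, f = 0}

/-- `A` admits a left `𝒟`-approximation. -/
def HasLeftApprox (𝒟 : Set C) (A : C) : Prop :=
  ∃ D ∈ 𝒟, ∃ f : A ⟶ D, ∀ D' ∈ 𝒟, ∀ g : A ⟶ D', ∃ h : D ⟶ D', f ≫ h = g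

/-- `A` admits a right `𝒟`-approximation. -/
def HasRightApprox (𝒟 : Set C) (A : C) : Prop :=
  ∃ D ∈ 𝒟, ∃ f : D ⟶ A, ∀ D' ∈ 𝒟, ∀ g : D' ⟶ A, ∃ h : D' ⟶ D, h ≫ f = g

/-- `μ⁻¹(ℳ;𝒟) = (𝒟 * ℳ[1]) ∩ ⊥(𝒟[1])`. -/
def muInv (ℳ 𝒟 : Set C) : Set C :=
  extClass 𝒟 (shiftSet ℳ (1:ℤ)) ∩ leftPerpShift 𝒟

/-- `μ(𝒩;𝒟) = (𝒩[-1] * 𝒟) ∩ (𝒟[-1])⊥`. -/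
def mu (𝒩 𝒟 : Set C) : Set C :=
  extClass (shiftSet 𝒩 (-1:ℤ)) 𝒟 ∩ shiftRightPerp 𝒟

/-- `(ℳ,𝒩)` is a `𝒟`-mutation pair. -/
def IsMutationPair (ℳ 𝒩 𝒟 : Set C) : Prop :=
  ℳ = mu 𝒩 𝒟 ∧ 𝒩 = muInv ℳ 𝒟

/-- Condition (RF): `𝒟` is functorially finite, rigid and `⊥(𝒟[1]) = (𝒟[-1])⊥`. -/
def RF (𝒟 : Set C) : Prop :=
  (∀ A : C, HasLeftApprox 𝒟 A) ∧ (∀ A : C, HasRightApprox 𝒟 A) ∧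
    homZero 𝒟 (shiftSet 𝒟 (1:ℤ)) ∧ leftPerpShift 𝒟 = shiftRightPerp 𝒟

/-- The Ext-injective objects of `𝒳`. -/
def extInj (𝒳 : Set C) : Set C :=
  {T : C | T ∈ 𝒳 ∧ ∀ A ∈ 𝒳, ∀ f : A ⟶ (T⟦(1:ℤ)⟧), f = 0}

/-- The Ext-projective objects of `𝒴`. -/
def extProj (𝒴 : Set C) : Set C :=
  {T : C | T ∈ 𝒴 ∧ ∀ B ∈ 𝒴, ∀ f : T ⟶ (B⟦(1:ℤ)⟧), f = 0}

/-!
Decompose `T⟦1⟧` along the torsion pair as `A → T⟦1⟧ → B → A⟦1⟧`. If `T` is Ext-injective in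
`𝒳`, the first map vanishes, so the triangle splits and `T⟦1⟧` is a direct summand of `B ∈ 𝒴`.
Dually, decomposing `T⟦-1⟧` for `T` Ext-projective in `𝒴` kills the second map, and `T⟦-1⟧` is a
direct summand of `A ∈ 𝒳`. The reverse inclusions are instances of `Hom(𝒳, 𝒴) = 0`.
-/

namespace IsSubcat

variable {𝒳 : Set C}

lemma mem_shiftSet_iff (h𝒳 : IsSubcat 𝒳) {n m : ℤ} (hnm : n + m = 0) {Z : C} :
    Z ∈ shiftSet 𝒳 n ↔ Z⟦m⟧ ∈ 𝒳 := by
  constructor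
  · rintro ⟨A, hA, ⟨e⟩⟩
    exact h𝒳.mem_of_iso (((shiftFunctorCompIsoId C n m hnm).app A).symm ≪≫
      (shiftFunctor C m).mapIso e) hA
  · intro hZ
    exact ⟨Z⟦m⟧, hZ, ⟨(shiftFunctorCompIsoId C m n (by omega)).app Z⟩⟩

lemma shiftSet_setOf_shift_mem (h𝒳 : IsSubcat 𝒳) (𝒲 : Set C) (n : ℤ) :
    shiftSet {T | T ∈ 𝒲 ∧ T⟦n⟧ ∈ 𝒳} n = shiftSet 𝒲 n ∩ 𝒳 := by
  ext Z
  constructor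
  · rintro ⟨T, ⟨hT𝒲, hT𝒳⟩, ⟨e⟩⟩
    exact ⟨⟨T, hT𝒲, ⟨e⟩⟩, h𝒳.mem_of_iso e hT𝒳⟩
  · rintro ⟨⟨T, hT𝒲, ⟨e⟩⟩, hZ⟩
    exact ⟨T, ⟨hT𝒲, h𝒳.mem_of_iso e.symm hZ⟩, ⟨e⟩⟩

lemma mem_of_distTriang_of_mor₃_eq_zero (h𝒳 : IsSubcat 𝒳) {T : Triangle C}
    (hT : T ∈ distTriang C) (h₀ : T.mor₃ = 0) (h₂ : T.obj₂ ∈ 𝒳) : T.obj₁ ∈ 𝒳 ∧ T.obj₃ ∈ 𝒳 :=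
  let ⟨e, _⟩ := exists_iso_binaryBiproduct_of_distTriang T hT h₀
  h𝒳.mem_of_biprod (h𝒳.mem_of_iso e h₂)

lemma mem_obj₂_of_mor₁_eq_zero (h𝒳 : IsSubcat 𝒳) {T : Triangle C} (hT : T ∈ distTriang C)
    (h₀ : T.mor₁ = 0) (h₃ : T.obj₃ ∈ 𝒳) : T.obj₂ ∈ 𝒳 :=
  (h𝒳.mem_of_distTriang_of_mor₃_eq_zero (rot_of_distTriang _ hT)
    (show -(T.mor₁⟦(1:ℤ)⟧') = 0 by rw [h₀, Functor.map_zero, neg_zero]) h₃).1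

lemma mem_obj₂_of_mor₂_eq_zero (h𝒳 : IsSubcat 𝒳) {T : Triangle C} (hT : T ∈ distTriang C)
    (h₀ : T.mor₂ = 0) (h₁ : T.obj₁ ∈ 𝒳) : T.obj₂ ∈ 𝒳 :=
  (h𝒳.mem_of_distTriang_of_mor₃_eq_zero (inv_rot_of_distTriang _ hT)
    (by rw [Triangle.invRotate_mor₃, h₀]; exact zero_comp) h₁).2

end IsSubcat

namespace IsTorsionPair

variable {𝒳 𝒴 : Set C}

lemma extInj_eq (hY : IsSubcat 𝒴) (h : IsTorsionPair 𝒳 𝒴) :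
    extInj 𝒳 = {T | T ∈ 𝒳 ∧ T⟦(1:ℤ)⟧ ∈ 𝒴} := by
  ext T
  constructor
  · rintro ⟨hT, hInj⟩
    obtain ⟨A, B, f, g, k, hA, hB, hTr⟩ := h.2 (T⟦(1:ℤ)⟧)
    exact ⟨hT, hY.mem_obj₂_of_mor₁_eq_zero hTr (hInj A hA f) hB⟩
  · rintro ⟨hT, hT𝒴⟩
    exact ⟨hT, fun A hA f => h.1 hA hT𝒴 f⟩

lemma extProj_eq (hX : IsSubcat 𝒳) (h : IsTorsionPair 𝒳 𝒴) :
    extProj 𝒴 = {T | T⟦(-1:ℤ)⟧ ∈ 𝒳 ∧ T ∈ 𝒴} := by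
  ext T
  constructor
  · rintro ⟨hT, hProj⟩
    obtain ⟨A, B, f, g, k, hA, hB, hTr⟩ := h.2 (T⟦(-1:ℤ)⟧)
    have hg : g⟦(1:ℤ)⟧' = 0 := by
      rw [← cancel_epi (shiftNegShift T (1:ℤ)).inv, comp_zero]
      exact hProj B hB _
    exact ⟨hX.mem_obj₂_of_mor₂_eq_zero hTr ((Functor.map_eq_zero_iff _).1 hg) hA, hT⟩
  · rintro ⟨hT𝒳, hT⟩
    refine ⟨hT, fun B hB f => ?_⟩
    have h₀ : (shiftFunctor C (1:ℤ)).preimage ((shiftNegShift T 1).hom ≫ f) = 0 :=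
      h.1 hT𝒳 hB _
    rw [← cancel_epi (shiftNegShift T (1:ℤ)).hom, comp_zero,
      ← (shiftFunctor C (1:ℤ)).map_preimage ((shiftNegShift T (1:ℤ)).hom ≫ f), h₀,
      Functor.map_zero]

end IsTorsionPair

/-- for a torsion pair `(𝒳,𝒴)`, `I(𝒳) = 𝒳 ∩ 𝒴[-1]` and
`P(𝒴) = I(𝒳)[1] = 𝒳[1] ∩ 𝒴`. -/
theorem stmt0 (𝒳 𝒴 : Set C) (hX : IsSubcat 𝒳) (hY : IsSubcat 𝒴)
    (h : IsTorsionPair 𝒳 𝒴) :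
    extInj 𝒳 = 𝒳 ∩ shiftSet 𝒴 (-1:ℤ) ∧
    extProj 𝒴 = shiftSet (extInj 𝒳) (1:ℤ) ∧
    shiftSet (extInj 𝒳) (1:ℤ) = shiftSet 𝒳 (1:ℤ) ∩ 𝒴 := by
  have hInj := h.extInj_eq hY
  have hShift : shiftSet (extInj 𝒳) (1:ℤ) = shiftSet 𝒳 (1:ℤ) ∩ 𝒴 := by
    rw [hInj, hY.shiftSet_setOf_shift_mem]
  refine ⟨?_, ?_, hShift⟩
  · ext T
    rw [hInj, Set.mem_inter_iff, hY.mem_shiftSet_iff (neg_add_cancel 1)]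
    rfl
  · ext T
    rw [hShift, h.extProj_eq hX, Set.mem_inter_iff, hX.mem_shiftSet_iff (add_neg_cancel 1)]
    rfl
end

section
/- Let (X,Y) be a torsion pair in a triangulated category C. Then I(X) is covariantly finite in X, i.e. every object of X admits a left I(X)-approximation, and P(Y) is contravariantly finite in Y, i.e. every object of Y admits a right P(Y)-approximation. -/
/-!
For `A ∈ 𝒳`, decompose `A[1]` along the torsion pair as `X' → A[1] → Y → X'[1]` and rotate twice
to get `A → Y[-1] → X' → A[1]`. Since `𝒳 = ⊥𝒴` is extension-closed, `Y[-1] ∈ 𝒳`, and it is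
Ext-injective because `Y[-1][1] ≅ Y ∈ 𝒴`. A map `A → T` with `T ∈ I(𝒳)` factors through
`A → Y[-1]` because the obstruction lies in `Hom(X', T[1]) = 0`. Dually, rotating the
decomposition of `B[-1]` gives `Y → X[1] → B → Y[1]`, and `X[1] → B` is a right
`P(𝒴)`-approximation.
-/

open CategoryTheory CategoryTheory.Limits CategoryTheory.Pretriangulated

variable {C : Type*} [Category C] [Preadditive C] [HasZeroObject C]
  [HasShift C ℤ] [∀ n : ℤ, (shiftFunctor C n).Additive] [Pretriangulated C]

lemma yoneda_exact₁_of_distTriang {T : Triangle C} (hT : T ∈ distTriang C) {X : C}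
    (f : T.obj₁ ⟶ X) (hf : T.mor₃ ≫ f⟦(1 : ℤ)⟧' = 0) : ∃ g : T.obj₂ ⟶ X, f = T.mor₁ ≫ g := by
  obtain ⟨g, hg⟩ : ∃ g : T.obj₂⟦(1 : ℤ)⟧ ⟶ X⟦(1 : ℤ)⟧, f⟦1⟧' = (-T.mor₁⟦1⟧') ≫ g :=
    Triangle.yoneda_exact₂ _ (rot_of_distTriang _ (rot_of_distTriang _ hT)) _ hf
  refine ⟨-(shiftFunctor C (1 : ℤ)).preimage g, (shiftFunctor C (1 : ℤ)).map_injective ?_⟩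
  rw [Functor.map_comp, Functor.map_neg, Functor.map_preimage, Preadditive.comp_neg,
    ← Preadditive.neg_comp]
  exact hg

variable {𝒳 𝒴 : Set C}

lemma hasLeftApprox_extInj_of_distTriang {T : Triangle C} (hT : T ∈ distTriang C)
    (h₂ : T.obj₂ ∈ extInj 𝒳) (h₃ : T.obj₃ ∈ 𝒳) {A : C} (e : A ≅ T.obj₁) :
    HasLeftApprox (extInj 𝒳) A :=
  ⟨T.obj₂, h₂, e.hom ≫ T.mor₁, fun _ hT' g => by
    obtain ⟨u, hu⟩ := yoneda_exact₁_of_distTriang hT (e.inv ≫ g) (hT'.2 _ h₃ _)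
    exact ⟨u, by simp [← hu]⟩⟩

lemma hasRightApprox_extProj_of_distTriang {T : Triangle C} (hT : T ∈ distTriang C)
    (h₁ : T.obj₁ ∈ 𝒴) (h₂ : T.obj₂ ∈ extProj 𝒴) {B : C} (e : T.obj₃ ≅ B) :
    HasRightApprox (extProj 𝒴) B :=
  ⟨T.obj₂, h₂, T.mor₂ ≫ e.hom, fun _ hT' g => by
    obtain ⟨u, hu⟩ := T.coyoneda_exact₃ hT (g ≫ e.inv) (hT'.2 _ h₁ _)
    exact ⟨u, by simp [← reassoc_of% hu]⟩⟩

namespace IsTorsionPair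

lemma mem_left_of_forall_eq_zero (h : IsTorsionPair 𝒳 𝒴) (hX : IsSubcat 𝒳) {M : C}
    (hM : ∀ Y ∈ 𝒴, ∀ u : M ⟶ Y, u = 0) : M ∈ 𝒳 := by
  obtain ⟨X, Y, a, b, c, hX', hY, hT⟩ := h.2 M
  obtain ⟨e, -, -⟩ := exists_iso_binaryBiproduct_of_distTriang _
    (inv_rot_of_distTriang _ hT) (by
      rw [Triangle.invRotate_mor₃, Triangle.mk_mor₂, hM Y hY b]; exact zero_comp)
  exact (hX.mem_of_biprod (hX.mem_of_iso e hX')).2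

lemma mem_right_of_forall_eq_zero (h : IsTorsionPair 𝒳 𝒴) (hY : IsSubcat 𝒴) {M : C}
    (hM : ∀ X ∈ 𝒳, ∀ u : X ⟶ M, u = 0) : M ∈ 𝒴 := by
  obtain ⟨X, Y, a, b, c, hX, hY', hT⟩ := h.2 M
  obtain ⟨e, -, -⟩ := exists_iso_binaryBiproduct_of_distTriang _
    (rot_of_distTriang _ hT) (by
      rw [Triangle.rotate_mor₃, Triangle.mk_mor₁, hM X hX a]
      exact neg_eq_zero.2 (Functor.map_zero _ _ _))
  exact (hY.mem_of_biprod (hY.mem_of_iso e hY')).1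

lemma mem_left_of_distTriang (h : IsTorsionPair 𝒳 𝒴) (hX : IsSubcat 𝒳) {T : Triangle C}
    (hT : T ∈ distTriang C) (h₁ : T.obj₁ ∈ 𝒳) (h₃ : T.obj₃ ∈ 𝒳) : T.obj₂ ∈ 𝒳 :=
  h.mem_left_of_forall_eq_zero hX fun _ hY u => by
    obtain ⟨v, rfl⟩ := T.yoneda_exact₂ hT u (h.1 h₁ hY _)
    rw [h.1 h₃ hY v, comp_zero]

lemma mem_right_of_distTriang (h : IsTorsionPair 𝒳 𝒴) (hY : IsSubcat 𝒴) {T : Triangle C}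
    (hT : T ∈ distTriang C) (h₁ : T.obj₁ ∈ 𝒴) (h₃ : T.obj₃ ∈ 𝒴) : T.obj₂ ∈ 𝒴 :=
  h.mem_right_of_forall_eq_zero hY fun _ hX u => by
    obtain ⟨v, rfl⟩ := T.coyoneda_exact₂ hT u (h.1 hX h₃ _)
    rw [h.1 hX h₁ v, zero_comp]

lemma hasLeftApprox_extInj (h : IsTorsionPair 𝒳 𝒴) (hX : IsSubcat 𝒳) {A : C} (hA : A ∈ 𝒳) :
    HasLeftApprox (extInj 𝒳) A := by
  obtain ⟨X, Y, a, b, c, hX', hY, hT⟩ := h.2 (A⟦(1 : ℤ)⟧)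
  -- `A⟦1⟧⟦-1⟧ ⟶ Y⟦-1⟧ ⟶ X ⟶ A⟦1⟧⟦-1⟧⟦1⟧`
  have hT' := inv_rot_of_distTriang _ (inv_rot_of_distTriang _ hT)
  have hI : Y⟦(-1 : ℤ)⟧ ∈ extInj 𝒳 := by
    refine ⟨h.mem_left_of_distTriang hX hT' (hX.mem_of_iso (shiftShiftNeg A 1).symm hA) hX',
      fun X₀ hX₀ u => (cancel_mono (shiftNegShift Y 1).hom).1 ?_⟩
    rw [zero_comp]
    exact h.1 hX₀ hY _
  exact hasLeftApprox_extInj_of_distTriang hT' hI hX' (shiftShiftNeg A 1).symm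

lemma hasRightApprox_extProj (h : IsTorsionPair 𝒳 𝒴) (hY : IsSubcat 𝒴) {B : C} (hB : B ∈ 𝒴) :
    HasRightApprox (extProj 𝒴) B := by
  obtain ⟨X, Y, a, b, c, hX, hY', hT⟩ := h.2 (B⟦(-1 : ℤ)⟧)
  -- `Y ⟶ X⟦1⟧ ⟶ B⟦-1⟧⟦1⟧ ⟶ Y⟦1⟧`
  have hT' := rot_of_distTriang _ (rot_of_distTriang _ hT)
  have hP : X⟦(1 : ℤ)⟧ ∈ extProj 𝒴 := by
    refine ⟨h.mem_right_of_distTriang hY hT' hY' (hY.mem_of_iso (shiftNegShift B 1).symm hB),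
      fun Y₀ hY₀ u => ?_⟩
    rw [← (shiftFunctor C (1 : ℤ)).map_preimage u, h.1 hX hY₀ (Functor.preimage _ u),
      Functor.map_zero]
  exact hasRightApprox_extProj_of_distTriang hT' hY' hP (shiftNegShift B 1)

end IsTorsionPair

/-- for a torsion pair `(𝒳,𝒴)`, `I(𝒳)` is covariantly finite in `𝒳` and
`P(𝒴)` is contravariantly finite in `𝒴`. -/
theorem stmt1 (𝒳 𝒴 : Set C) (hX : IsSubcat 𝒳) (hY : IsSubcat 𝒴)
    (h : IsTorsionPair 𝒳 𝒴) :
    (∀ A ∈ 𝒳, ∃ T ∈ extInj 𝒳, ∃ f : A ⟶ T,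
      ∀ T' ∈ extInj 𝒳, ∀ g : A ⟶ T', ∃ u : T ⟶ T', f ≫ u = g) ∧
    (∀ B ∈ 𝒴, ∃ T ∈ extProj 𝒴, ∃ f : T ⟶ B,
      ∀ T' ∈ extProj 𝒴, ∀ g : T' ⟶ B, ∃ u : T' ⟶ T, u ≫ f = g) :=
  ⟨fun _ hA => h.hasLeftApprox_extInj hX hA, fun _ hB => h.hasRightApprox_extProj hY hB⟩
end

section
/- Let (X,Y) be a torsion pair in a triangulated category C with core I = X ∩ Y[-1]. Then (X,Y) is a t-structure (i.e. X[1] ⊆ X, equivalently Y[-1] ⊆ Y) if and only if I consists only of zero objects. -/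
open CategoryTheory CategoryTheory.Limits CategoryTheory.Pretriangulated

variable {C : Type*} [Category C] [Preadditive C] [HasZeroObject C]
  [HasShift C ℤ] [∀ n : ℤ, (shiftFunctor C n).Additive] [Pretriangulated C]

/-! If `𝒳⟦1⟧ ⊆ 𝒳`, a core object `Z` has `Z⟦1⟧ ∈ 𝒳 ∩ 𝒴`, which is zero as `Hom(𝒳, 𝒴) = 0`.
Conversely, `𝒳` consists exactly of the objects `Z` with `Hom(Z, 𝒴) = 0`, and for `A ∈ 𝒳` the
shift adjunction identifies `Hom(A⟦1⟧, 𝒴)` with `Hom(A, 𝒴⟦-1⟧)`, which vanishes once the core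
is zero. -/

lemma mem_shiftSet_iff {𝒳 : Set C} (hX : IsSubcat 𝒳) {n m : ℤ} (hnm : n + m = 0) {Z : C} :
    Z ∈ shiftSet 𝒳 n ↔ Z⟦m⟧ ∈ 𝒳 := by
  constructor
  · rintro ⟨A, hA, ⟨e⟩⟩
    exact hX.mem_of_iso
      (((shiftFunctorCompIsoId C n m hnm).app A).symm ≪≫ (shiftFunctor C m).mapIso e) hA
  · intro hZ
    have hmn : m + n = 0 := by omega
    exact ⟨Z⟦m⟧, hZ, ⟨(shiftFunctorCompIsoId C m n hmn).app Z⟩⟩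

namespace IsTorsionPair

variable {𝒳 𝒴 : Set C}

lemma isZero_of_mem_of_mem (h : IsTorsionPair 𝒳 𝒴) {Z : C} (hX : Z ∈ 𝒳) (hY : Z ∈ 𝒴) :
    IsZero Z :=
  (IsZero.iff_id_eq_zero Z).mpr (h.1 hX hY (𝟙 Z))

/-- In the triangle `A → Z → B → A⟦1⟧` with `A ∈ 𝒳`, `B ∈ 𝒴`, the map `Z → B` vanishes, so `Z` is a
direct summand of `A`. -/
lemma mem_left_of_hom_eq_zero (h : IsTorsionPair 𝒳 𝒴) (hX : IsSubcat 𝒳) {Z : C}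
    (hZ : ∀ B ∈ 𝒴, ∀ f : Z ⟶ B, f = 0) : Z ∈ 𝒳 := by
  obtain ⟨A, B, f, g, w, hA, hB, hT⟩ := h.2 Z
  obtain rfl := hZ B hB g
  obtain ⟨e, -, -⟩ := exists_iso_binaryBiproduct_of_distTriang _ (inv_rot_of_distTriang _ hT)
    (by exact zero_comp)
  exact (hX.mem_of_biprod (hX.mem_of_iso e hA)).2

lemma mem_right_of_hom_eq_zero (h : IsTorsionPair 𝒳 𝒴) (hY : IsSubcat 𝒴) {Z : C}
    (hZ : ∀ A ∈ 𝒳, ∀ f : A ⟶ Z, f = 0) : Z ∈ 𝒴 := by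
  obtain ⟨A, B, f, g, w, hA, hB, hT⟩ := h.2 Z
  obtain rfl := hZ A hA f
  obtain ⟨e, -, -⟩ := exists_iso_binaryBiproduct_of_distTriang _ (rot_of_distTriang _ hT)
    (by exact neg_eq_zero.2 (Functor.map_zero _ _ _))
  exact (hY.mem_of_biprod (hY.mem_of_iso e hB)).1

/-- The `𝒳`-part `X'` of `B⟦-1⟧` has `Hom(𝒳, X'⟦1⟧) = 0`, so it lies in the core, and every map
from `𝒳` to `B⟦-1⟧` factors through it. -/
lemma hom_to_shift_neg_one_eq_zero (h : IsTorsionPair 𝒳 𝒴) (hY : IsSubcat 𝒴)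
    (hcore : ∀ Z ∈ 𝒳 ∩ shiftSet 𝒴 (-1:ℤ), IsZero Z) {A B : C} (hA : A ∈ 𝒳) (hB : B ∈ 𝒴)
    (g : A ⟶ B⟦(-1:ℤ)⟧) : g = 0 := by
  obtain ⟨X', B', f', g', w', hX', hB', hT⟩ := h.2 (B⟦(-1:ℤ)⟧)
  have hB₁ : B⟦(-1:ℤ)⟧⟦(1:ℤ)⟧ ∈ 𝒴 :=
    hY.mem_of_iso ((shiftFunctorCompIsoId C (-1) 1 (by norm_num)).app B).symm hB
  have hX'₁ : X'⟦(1:ℤ)⟧ ∈ 𝒴 := by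
    refine h.mem_right_of_hom_eq_zero hY fun A' hA' f => ?_
    obtain ⟨q, rfl⟩ := Triangle.coyoneda_exact₁ _ hT f (h.1 hA' hB₁ _)
    rw [h.1 hA' hB' q]
    exact zero_comp
  have hX'zero : IsZero X' := hcore X' ⟨hX', (mem_shiftSet_iff hY (by norm_num)).2 hX'₁⟩
  obtain ⟨a, rfl⟩ := Triangle.coyoneda_exact₂ _ hT g (h.1 hA hB' _)
  rw [hX'zero.eq_of_tgt a 0]
  exact zero_comp

end IsTorsionPair

/-- a torsion pair `(𝒳,𝒴)` is a t-structure iff its core `𝒳 ∩ 𝒴[-1]`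
consists only of zero objects. -/
theorem stmt2 (𝒳 𝒴 : Set C) (hX : IsSubcat 𝒳) (hY : IsSubcat 𝒴)
    (h : IsTorsionPair 𝒳 𝒴) :
    shiftSet 𝒳 (1:ℤ) ⊆ 𝒳 ↔ ∀ Z ∈ 𝒳 ∩ shiftSet 𝒴 (-1:ℤ), IsZero Z := by
  constructor
  · rintro hshift Z ⟨hZX, hZY⟩
    have hZ₁X : Z⟦(1:ℤ)⟧ ∈ 𝒳 := hshift ⟨Z, hZX, ⟨Iso.refl _⟩⟩
    have hZ₁Y : Z⟦(1:ℤ)⟧ ∈ 𝒴 := (mem_shiftSet_iff hY (by norm_num)).1 hZY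
    exact IsZero.of_full_of_faithful_of_isZero (shiftFunctor C (1:ℤ)) Z
      (h.isZero_of_mem_of_mem hZ₁X hZ₁Y)
  · rintro hcore Z ⟨A, hA, ⟨e⟩⟩
    refine hX.mem_of_iso e (h.mem_left_of_hom_eq_zero hX fun B hB f => ?_)
    let adj := (shiftEquiv C (1:ℤ)).toAdjunction
    have hf : adj.homEquiv A B f = 0 := h.hom_to_shift_neg_one_eq_zero hY hcore hA hB _
    rw [← (adj.homEquiv A B).symm_apply_apply f, hf, adj.homEquiv_counit, Functor.map_zero]
    exact zero_comp
end

section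
/- Let (X,Y) be a torsion pair in a triangulated category C. Then (X,Y) is a cluster tilting torsion pair (i.e. for every object M of C, M lies in X if and only if Hom(X,M[1])=0 for all X in X) if and only if Y = X[1]. -/
open CategoryTheory CategoryTheory.Limits CategoryTheory.Pretriangulated

variable {C : Type*} [Category C] [Preadditive C] [HasZeroObject C]
  [HasShift C ℤ] [∀ n : ℤ, (shiftFunctor C n).Additive] [Pretriangulated C]

/-!
In a torsion pair `(𝒳, 𝒴)` the torsion-free class is `𝒴 = {Z | Hom(𝒳, Z) = 0}`: if
`Hom(𝒳, Z) = 0`, the decomposition triangle `A → Z → B → A[1]` splits, making `Z` a direct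
summand of `B ∈ 𝒴`. Hence the cluster tilting condition reads `M ∈ 𝒳 ↔ M[1] ∈ 𝒴`, which,
`[1]` being an autoequivalence and both classes closed under isomorphisms, says `𝒴 = 𝒳[1]`.
-/

lemma nonempty_iso_biprod_of_distTriang_of_mor₁_eq_zero (T : Triangle C)
    (hT : T ∈ distTriang C) (h₁ : T.mor₁ = 0) :
    Nonempty (T.obj₃ ≅ T.obj₂ ⊞ T.obj₁⟦(1:ℤ)⟧) := by
  obtain ⟨e, -, -⟩ := exists_iso_binaryBiproduct_of_distTriang _ (rot_of_distTriang _ hT)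
    (by rw [Triangle.rotate_mor₃, h₁]; exact neg_eq_zero.2 (Functor.map_zero _ _ _))
  exact ⟨e⟩

lemma IsTorsionPair.mem_right_iff {𝒳 𝒴 : Set C} (h : IsTorsionPair 𝒳 𝒴) (hY : IsSubcat 𝒴)
    {Z : C} : Z ∈ 𝒴 ↔ ∀ A ∈ 𝒳, ∀ f : A ⟶ Z, f = 0 := by
  refine ⟨fun hZ A hA f => h.1 hA hZ f, fun hZ => ?_⟩
  obtain ⟨A, B, f, g, k, hA, hB, hT⟩ := h.2 Z
  obtain ⟨e⟩ := nonempty_iso_biprod_of_distTriang_of_mor₁_eq_zero _ hT (hZ A hA f)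
  exact (hY.mem_of_biprod (hY.mem_of_iso e hB)).1

lemma IsSubcat.shift_mem_shiftSet_iff {𝒳 : Set C} (hX : IsSubcat 𝒳) (n : ℤ) {M : C} :
    M⟦n⟧ ∈ shiftSet 𝒳 n ↔ M ∈ 𝒳 := by
  refine ⟨fun ⟨A, hA, ⟨e⟩⟩ => hX.mem_of_iso ?_ hA, fun hM => ⟨M, hM, ⟨Iso.refl _⟩⟩⟩
  exact (shiftFunctorCompIsoId C n (-n) (add_neg_cancel n)).symm.app A ≪≫
    (shiftFunctor C (-n)).mapIso e ≪≫ (shiftFunctorCompIsoId C n (-n) (add_neg_cancel n)).app M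

lemma IsSubcat.eq_shiftSet_iff {𝒳 𝒴 : Set C} (hX : IsSubcat 𝒳) (hY : IsSubcat 𝒴) (n : ℤ) :
    𝒴 = shiftSet 𝒳 n ↔ ∀ M : C, M⟦n⟧ ∈ 𝒴 ↔ M ∈ 𝒳 := by
  refine ⟨fun hYX M => hYX ▸ hX.shift_mem_shiftSet_iff n, fun hYX => ?_⟩
  ext Z
  let e : Z⟦-n⟧⟦n⟧ ≅ Z := (shiftFunctorCompIsoId C (-n) n (neg_add_cancel n)).app Z
  constructor
  · exact fun hZ => ⟨Z⟦-n⟧, (hYX _).1 (hY.mem_of_iso e.symm hZ), ⟨e⟩⟩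
  · rintro ⟨A, hA, ⟨e'⟩⟩
    exact hY.mem_of_iso e' ((hYX A).2 hA)

/-- a torsion pair `(𝒳,𝒴)` is cluster tilting iff `𝒴 = 𝒳[1]`. -/
theorem stmt3 (𝒳 𝒴 : Set C) (hX : IsSubcat 𝒳) (hY : IsSubcat 𝒴)
    (h : IsTorsionPair 𝒳 𝒴) :
    (∀ M : C, M ∈ 𝒳 ↔ ∀ A ∈ 𝒳, ∀ f : A ⟶ (M⟦(1:ℤ)⟧), f = 0) ↔
      𝒴 = shiftSet 𝒳 (1:ℤ) := by
  simp only [hX.eq_shiftSet_iff hY, h.mem_right_iff hY]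
  exact forall_congr' fun _ => Iff.comm
end

section
/- Let (X,Y) be a torsion pair in a triangulated category C such that X[1] ⊆ Y and every object M of C with Hom(M,M[1])=0 belongs to X*X[1]. Then (X,Y) is a maximal rigid torsion pair: X is rigid (Hom(X,X[1])=0), and any object M satisfying Hom(M⊕X₁,(M⊕X₂)[1])=0 for all X₁,X₂ in X belongs to X. -/
/-!
Rigidity of `𝒳` is `Hom(𝒳, 𝒴) = 0` restricted to `𝒳[1] ⊆ 𝒴`. For maximality, `Hom(M, M[1])` and
`Hom(M, X[1])` are retracts of groups `Hom(M ⊕ X₁, (M ⊕ X₂)[1])`, so `M` is rigid and `Hom(M, 𝒳[1]) = 0`.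
Hence `M` lies in a triangle `X₀ → M → X₁[1] → X₀[1]` with `X₀, X₁ ∈ 𝒳` whose second map vanishes;
such a triangle splits, so `M` is a direct summand of `X₀` and belongs to `𝒳`.
-/

open CategoryTheory CategoryTheory.Limits CategoryTheory.Pretriangulated

variable {C : Type*} [Category C] [Preadditive C] [HasZeroObject C]
  [HasShift C ℤ] [∀ n : ℤ, (shiftFunctor C n).Additive] [Pretriangulated C]

lemma Retract.eq_zero_of_forall_eq_zero {D E : Type*} [Category D] [Category E]
    [HasZeroMorphisms E] {P' P : E} {Q' Q : D} (rP : Retract P' P) (rQ : Retract Q' Q)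
    (F : D ⥤ E) (h : ∀ f : P ⟶ F.obj Q, f = 0) (f : P' ⟶ F.obj Q') : f = 0 :=
  calc f = rP.i ≫ (rP.r ≫ f ≫ F.map rQ.i) ≫ F.map rQ.r := by simp [← Functor.map_comp]
    _ = 0 := by rw [h (rP.r ≫ f ≫ F.map rQ.i), zero_comp, comp_zero]

lemma nonempty_iso_biprod_of_distTriang_of_mor₂_eq_zero (T : Triangle C)
    (hT : T ∈ distTriang C) (h : T.mor₂ = 0) :
    Nonempty (T.obj₁ ≅ (T.obj₃⟦(-1:ℤ)⟧) ⊞ T.obj₂) := by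
  obtain ⟨e, -⟩ := exists_iso_binaryBiproduct_of_distTriang T.invRotate
    (inv_rot_of_distTriang T hT) (by rw [Triangle.invRotate_mor₃, h]; exact zero_comp)
  exact ⟨e⟩

lemma eq_zero_of_mem_leftPerpShift {D : Type*} [Category D] [Preadditive D] [HasShift D ℤ]
    {𝒳 : Set D} {M Z : D} (hM : M ∈ leftPerpShift 𝒳)
    (hZ : Z ∈ shiftSet 𝒳 (1:ℤ)) (g : M ⟶ Z) : g = 0 := by
  obtain ⟨X, hX, ⟨e⟩⟩ := hZ
  exact (cancel_mono e.inv).1 (by simpa using hM X hX (g ≫ e.inv))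

lemma IsSubcat.mem_of_mem_extClass {𝒳 𝒵 : Set C} (h𝒳 : IsSubcat 𝒳) {M : C}
    (hM : M ∈ extClass 𝒳 𝒵) (hM𝒵 : ∀ Z ∈ 𝒵, ∀ g : M ⟶ Z, g = 0) : M ∈ 𝒳 := by
  obtain ⟨A, B, f, g, k, hA, hB, hT⟩ := hM
  obtain ⟨e⟩ := nonempty_iso_biprod_of_distTriang_of_mor₂_eq_zero _ hT (hM𝒵 B hB g)
  exact (h𝒳.mem_of_biprod (h𝒳.mem_of_iso e hA)).2

theorem stmt4_general (𝒳 𝒴 : Set C) (hX : IsSubcat 𝒳)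
    (h : IsTorsionPair 𝒳 𝒴)
    (hshift : shiftSet 𝒳 (1:ℤ) ⊆ 𝒴)
    (hrigid : ∀ M : C, (∀ f : M ⟶ (M⟦(1:ℤ)⟧), f = 0) →
      M ∈ extClass 𝒳 (shiftSet 𝒳 (1:ℤ))) :
    homZero 𝒳 (shiftSet 𝒳 (1:ℤ)) ∧
    ∀ M : C, (∀ X₁ ∈ 𝒳, ∀ X₂ ∈ 𝒳, ∀ f : (M ⊞ X₁) ⟶ ((M ⊞ X₂)⟦(1:ℤ)⟧), f = 0) →
      M ∈ 𝒳 := by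
  refine ⟨fun A B hA hB f => h.1 hA (hshift hB) f, fun M hM => ?_⟩
  -- any object of `𝒳` serves as `X₁ = X₂` to see that `M` is rigid
  obtain ⟨A, -, -, -, -, hA, -, -⟩ := h.2 M
  have hM_rigid : ∀ f : M ⟶ M⟦(1:ℤ)⟧, f = 0 :=
    Retract.eq_zero_of_forall_eq_zero (BinaryBiproduct.bicone M A).retract_left
      (BinaryBiproduct.bicone M A).retract_left _ (hM A hA A hA)
  have hM_perp : M ∈ leftPerpShift 𝒳 := fun X hX =>
    Retract.eq_zero_of_forall_eq_zero (BinaryBiproduct.bicone M X).retract_left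
      (BinaryBiproduct.bicone M X).retract_right _ (hM X hX X hX)
  exact hX.mem_of_mem_extClass (hrigid M hM_rigid)
    (fun _ hZ => eq_zero_of_mem_leftPerpShift hM_perp hZ)

/-- if `(𝒳,𝒴)` is a torsion pair with `𝒳[1] ⊆ 𝒴` and every rigid object
belongs to `𝒳 * 𝒳[1]`, then `(𝒳,𝒴)` is a maximal rigid torsion pair. -/
theorem stmt4 (𝒳 𝒴 : Set C) (hX : IsSubcat 𝒳) (hY : IsSubcat 𝒴)
    (h : IsTorsionPair 𝒳 𝒴)
    (hshift : shiftSet 𝒳 (1:ℤ) ⊆ 𝒴)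
    (hrigid : ∀ M : C, (∀ f : M ⟶ (M⟦(1:ℤ)⟧), f = 0) →
      M ∈ extClass 𝒳 (shiftSet 𝒳 (1:ℤ))) :
    homZero 𝒳 (shiftSet 𝒳 (1:ℤ)) ∧
    ∀ M : C, (∀ X₁ ∈ 𝒳, ∀ X₂ ∈ 𝒳, ∀ f : (M ⊞ X₁) ⟶ ((M ⊞ X₂)⟦(1:ℤ)⟧), f = 0) →
      M ∈ 𝒳 :=
  stmt4_general 𝒳 𝒴 hX h hshift hrigid
end

section
/- Let C be a triangulated category and D a rigid subcategory (Hom(D,D[1])=0). Let Ď denote the subcategory of objects of C admitting a left D-approximation and D̂ the subcategory of objects admitting a right D-approximation. Then M ↦ μ⁻¹(M;D) gives a one-to-one correspondence between the set of subcategories M of C satisfying D ⊆ M ⊆ Ď ∩ (D[-1])⊥ and the set of subcategories N of C satisfying D ⊆ N ⊆ D̂ ∩ ⊥(D[1]), whose inverse is N ↦ μ(N;D). -/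
open CategoryTheory CategoryTheory.Limits CategoryTheory.Pretriangulated

variable {C : Type*} [Category C] [Preadditive C] [HasZeroObject C]
  [HasShift C ℤ] [∀ n : ℤ, (shiftFunctor C n).Additive] [Pretriangulated C]

/-! The cone `N` of a left `𝒟`-approximation `M ⟶ D` of `M ∈ ℳ` lies in `μ⁻¹(ℳ;𝒟)`, rigidity
of `𝒟` putting it in `⊥(𝒟[1])`. Conversely every object of `𝒟 * ℳ[1]` is such a cone
`M ⟶ D ⟶ N ⟶ M[1]`, and since `Hom(𝒟, M[1]) = 0` the map `D ⟶ N` is a right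
`𝒟`-approximation. Dually, `μ(𝒩;𝒟)` consists of the fibres of right `𝒟`-approximations of
objects of `𝒩`. Everything else rests on one comparison: the fibres of two right
`𝒟`-approximations of the same object (dually, the cones of two left ones) agree up to direct
summands in `𝒟`. This recovers `ℳ` from `μ⁻¹(ℳ;𝒟)` and `𝒩` from `μ(𝒩;𝒟)`, and, applied to
`P ⊞ Q`, shows that the mutations are closed under direct summands. -/

open CategoryTheory.Preadditive ZeroObject

section Shift

variable {𝒞 : Type*} [Category 𝒞] [Preadditive 𝒞] [HasShift 𝒞 ℤ] {𝒳 𝒴 : Set 𝒞}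

lemma forall_hom_shift_neg_one_eq_zero_iff {X Y : 𝒞} :
    (∀ f : X⟦(-1:ℤ)⟧ ⟶ Y, f = 0) ↔ ∀ f : X ⟶ Y⟦(1:ℤ)⟧, f = 0 := by
  let e := (shiftEquiv 𝒞 (1:ℤ)).symm.toAdjunction.homEquiv X Y
  exact ⟨fun h _ => e.symm.injective ((h _).trans (h _).symm),
    fun h _ => e.injective ((h _).trans (h _).symm)⟩

lemma mem_shiftRightPerp_iff {M : 𝒞} :
    M ∈ shiftRightPerp 𝒳 ↔ ∀ D ∈ 𝒳, ∀ f : D ⟶ M⟦(1:ℤ)⟧, f = 0 :=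
  forall₂_congr fun _ _ => forall_hom_shift_neg_one_eq_zero_iff

lemma subset_leftPerpShift_of_homZero (h : homZero 𝒳 (shiftSet 𝒴 (1:ℤ))) :
    𝒳 ⊆ leftPerpShift 𝒴 :=
  fun _ hX D hD f => h hX ⟨D, hD, ⟨Iso.refl _⟩⟩ f

lemma subset_shiftRightPerp_of_homZero (h : homZero 𝒳 (shiftSet 𝒴 (1:ℤ))) :
    𝒴 ⊆ shiftRightPerp 𝒳 :=
  fun _ hY => mem_shiftRightPerp_iff.2 fun _ hD f => h hD ⟨_, hY, ⟨Iso.refl _⟩⟩ f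

end Shift

section Approx

variable {𝒞 : Type*} [Category 𝒞]

def IsRightApprox (𝒟 : Set 𝒞) {D X : 𝒞} (f : D ⟶ X) : Prop :=
  ∀ D' ∈ 𝒟, ∀ g : D' ⟶ X, ∃ h : D' ⟶ D, h ≫ f = g

def IsLeftApprox (𝒟 : Set 𝒞) {X D : 𝒞} (f : X ⟶ D) : Prop :=
  ∀ D' ∈ 𝒟, ∀ g : X ⟶ D', ∃ h : D ⟶ D', f ≫ h = g

variable {𝒟 : Set 𝒞}

lemma IsRightApprox.of_comp {D D' X : 𝒞} {u : D ⟶ D'} {f : D' ⟶ X}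
    (hf : IsRightApprox 𝒟 (u ≫ f)) : IsRightApprox 𝒟 f := fun D'' hD'' g =>
  let ⟨h, hh⟩ := hf D'' hD'' g
  ⟨h ≫ u, by rw [Category.assoc, hh]⟩

lemma IsLeftApprox.of_comp {X D D' : 𝒞} {f : X ⟶ D} {u : D ⟶ D'}
    (hf : IsLeftApprox 𝒟 (f ≫ u)) : IsLeftApprox 𝒟 f := fun D'' hD'' g =>
  let ⟨h, hh⟩ := hf D'' hD'' g
  ⟨u ≫ h, by rw [← Category.assoc, hh]⟩

end Approx

section BiprodPi

variable {𝒞 : Type*} [Category 𝒞] [HasZeroMorphisms 𝒞] [HasBinaryBiproducts 𝒞]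
  [HasProductsOfShape WalkingPair 𝒞]

noncomputable def biprodIsoPi (F : WalkingPair → 𝒞) : F .left ⊞ F .right ≅ ∏ᶜ F where
  hom := Pi.lift fun j => WalkingPair.casesOn j biprod.fst biprod.snd
  inv := biprod.lift (Pi.π F .left) (Pi.π F .right)
  inv_hom_id := by ext ⟨_ | _⟩ <;> simp

lemma piMap_comp_biprodIsoPi_inv {F G : WalkingPair → 𝒞} (φ : ∀ j, F j ⟶ G j) :
    Limits.Pi.map φ ≫ (biprodIsoPi G).inv =
      (biprodIsoPi F).inv ≫ biprod.map (φ .left) (φ .right) := by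
  ext <;> simp [biprodIsoPi]

end BiprodPi

section Triangles

lemma distTriang_mk_of_iso₂ {A X X' B : C} {f : A ⟶ X} {g : X ⟶ B} {h : B ⟶ A⟦(1:ℤ)⟧}
    (hT : Triangle.mk f g h ∈ distTriang C) (e : X ≅ X') :
    Triangle.mk (f ≫ e.hom) (e.inv ≫ g) h ∈ distTriang C :=
  isomorphic_distinguished _ hT _ (Triangle.isoMk _ _ (Iso.refl _) e.symm (Iso.refl _)
    (by simp [Triangle.mk]) (by simp [Triangle.mk]) (by simp [Triangle.mk]))

lemma distTriang_mk_of_iso₃ {A X B B' : C} {f : A ⟶ X} {g : X ⟶ B} {h : B ⟶ A⟦(1:ℤ)⟧}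
    (hT : Triangle.mk f g h ∈ distTriang C) (e : B ≅ B') :
    Triangle.mk f (g ≫ e.hom) (e.inv ≫ h) ∈ distTriang C :=
  isomorphic_distinguished _ hT _ (Triangle.isoMk _ _ (Iso.refl _) (Iso.refl _) e.symm
    (by simp [Triangle.mk]) (by simp [Triangle.mk]) (by simp [Triangle.mk]))

lemma biprod_distTriang {A₁ X₁ B₁ A₂ X₂ B₂ : C}
    {f₁ : A₁ ⟶ X₁} {g₁ : X₁ ⟶ B₁} {h₁ : B₁ ⟶ A₁⟦(1:ℤ)⟧}
    {f₂ : A₂ ⟶ X₂} {g₂ : X₂ ⟶ B₂} {h₂ : B₂ ⟶ A₂⟦(1:ℤ)⟧}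
    (hT₁ : Triangle.mk f₁ g₁ h₁ ∈ distTriang C) (hT₂ : Triangle.mk f₂ g₂ h₂ ∈ distTriang C) :
    ∃ h : B₁ ⊞ B₂ ⟶ (A₁ ⊞ A₂)⟦(1:ℤ)⟧,
      Triangle.mk (biprod.map f₁ f₂) (biprod.map g₁ g₂) h ∈ distTriang C := by
  let T : WalkingPair → Triangle C := fun j =>
    WalkingPair.casesOn j (Triangle.mk f₁ g₁ h₁) (Triangle.mk f₂ g₂ h₂)
  let e₁ := biprodIsoPi fun j => (T j).obj₁
  let e₃ := biprodIsoPi fun j => (T j).obj₃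
  have hT : productTriangle T ∈ distTriang C :=
    productTriangle_distinguished T (by rintro ⟨_ | _⟩; exacts [hT₁, hT₂])
  exact ⟨e₃.hom ≫ (productTriangle T).mor₃ ≫ e₁.inv⟦(1:ℤ)⟧',
    isomorphic_distinguished _ hT _ (Triangle.isoMk _ _ e₁.symm (biprodIsoPi _).symm e₃.symm
      (piMap_comp_biprodIsoPi_inv fun j => (T j).mor₁)
      (piMap_comp_biprodIsoPi_inv fun j => (T j).mor₂) (e₃.inv_hom_id_assoc _).symm).symm⟩

lemma Triangle.yoneda_exact₁ {A X B Z : C} {f : A ⟶ X} {g : X ⟶ B} {h : B ⟶ A⟦(1:ℤ)⟧}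
    (hT : Triangle.mk f g h ∈ distTriang C) (φ : A ⟶ Z) (hφ : h ≫ φ⟦(1:ℤ)⟧' = 0) :
    ∃ ψ : X ⟶ Z, φ = f ≫ ψ := by
  obtain ⟨ψ, hψ⟩ := Triangle.yoneda_exact₃ _ (rot_of_distTriang _ hT) (φ⟦(1:ℤ)⟧') hφ
  dsimp only [Triangle.rotate, Triangle.mk] at ψ hψ
  refine ⟨-(shiftFunctor C (1:ℤ)).preimage ψ, (shiftFunctor C (1:ℤ)).map_injective ?_⟩
  rw [Functor.map_comp, Functor.map_neg, Functor.map_preimage, comp_neg, hψ, neg_comp]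

end Triangles

section Subcategories

variable {𝒳 𝒴 : Set C}

lemma IsSubcat.zero_mem (h𝒳 : IsSubcat 𝒳) {A : C} (hA : A ∈ 𝒳) : (0 : C) ∈ 𝒳 :=
  (h𝒳.mem_of_biprod (h𝒳.mem_of_iso (isoBiprodZero (isZero_zero C)) hA)).2

lemma IsSubcat.mem_of_retract (h𝒳 : IsSubcat 𝒳) {X Y : C} (e : Retract X Y) (hY : Y ∈ 𝒳) :
    X ∈ 𝒳 := by
  obtain ⟨Z, q, r, hT⟩ := distinguished_cocone_triangle e.i
  have hr : r = 0 := by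
    have h0 : r ≫ e.i⟦(1:ℤ)⟧' = 0 := comp_distTriang_mor_zero₃₁ _ hT
    simpa [← Functor.map_comp] using h0 =≫ e.r⟦(1:ℤ)⟧'
  obtain ⟨iso, -, -⟩ := exists_iso_binaryBiproduct_of_distTriang _ hT hr
  exact (h𝒳.mem_of_biprod (h𝒳.mem_of_iso iso hY)).1

lemma isSubcat_leftPerpShift (𝒟 : Set C) : IsSubcat (leftPerpShift 𝒟) where
  mem_of_iso _ _ e hA D hD f := by simpa using e.inv ≫= hA D hD (e.hom ≫ f)
  biprod_mem _ _ hA hB D hD f :=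
    biprod.hom_ext' _ _ (by simpa using hA D hD _) (by simpa using hB D hD _)
  mem_of_biprod _ _ hAB :=
    ⟨fun D hD f => by simpa using biprod.inl ≫= hAB D hD (biprod.fst ≫ f),
      fun D hD f => by simpa using biprod.inr ≫= hAB D hD (biprod.snd ≫ f)⟩

lemma isSubcat_shiftRightPerp (𝒟 : Set C) : IsSubcat (shiftRightPerp 𝒟) where
  mem_of_iso _ _ e hA D hD f := by simpa using hA D hD (f ≫ e.inv) =≫ e.hom
  biprod_mem _ _ hA hB D hD f :=
    biprod.hom_ext _ _ (by simpa using hA D hD _) (by simpa using hB D hD _)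
  mem_of_biprod _ _ hAB :=
    ⟨fun D hD f => by simpa using hAB D hD (f ≫ biprod.inl) =≫ biprod.fst,
      fun D hD f => by simpa using hAB D hD (f ≫ biprod.inr) =≫ biprod.snd⟩

lemma shiftSet_biprod_mem (h𝒳 : ∀ ⦃A B : C⦄, A ∈ 𝒳 → B ∈ 𝒳 → (A ⊞ B) ∈ 𝒳) {n : ℤ}
    ⦃A B : C⦄ (hA : A ∈ shiftSet 𝒳 n) (hB : B ∈ shiftSet 𝒳 n) : (A ⊞ B) ∈ shiftSet 𝒳 n := by
  obtain ⟨X, hX, ⟨e⟩⟩ := hA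
  obtain ⟨Y, hY, ⟨e'⟩⟩ := hB
  have := preservesBinaryBiproduct_of_preservesBiproduct (shiftFunctor C n) X Y
  exact ⟨X ⊞ Y, h𝒳 hX hY, ⟨(shiftFunctor C n).mapBiprod X Y ≪≫ biprod.mapIso e e'⟩⟩

lemma extClass_mem_of_iso {Z Z' : C} (e : Z ≅ Z') (hZ : Z ∈ extClass 𝒳 𝒴) :
    Z' ∈ extClass 𝒳 𝒴 := by
  obtain ⟨A, B, f, g, h, hA, hB, hT⟩ := hZ
  exact ⟨A, B, f ≫ e.hom, e.inv ≫ g, h, hA, hB, distTriang_mk_of_iso₂ hT e⟩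

lemma extClass_biprod_mem (h𝒳 : ∀ ⦃A B : C⦄, A ∈ 𝒳 → B ∈ 𝒳 → (A ⊞ B) ∈ 𝒳)
    (h𝒴 : ∀ ⦃A B : C⦄, A ∈ 𝒴 → B ∈ 𝒴 → (A ⊞ B) ∈ 𝒴) {Z₁ Z₂ : C}
    (hZ₁ : Z₁ ∈ extClass 𝒳 𝒴) (hZ₂ : Z₂ ∈ extClass 𝒳 𝒴) : (Z₁ ⊞ Z₂) ∈ extClass 𝒳 𝒴 := by
  obtain ⟨A₁, B₁, f₁, g₁, h₁, hA₁, hB₁, hT₁⟩ := hZ₁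
  obtain ⟨A₂, B₂, f₂, g₂, h₂, hA₂, hB₂, hT₂⟩ := hZ₂
  obtain ⟨h, hT⟩ := biprod_distTriang hT₁ hT₂
  exact ⟨_, _, _, _, h, h𝒳 hA₁ hA₂, h𝒴 hB₁ hB₂, hT⟩

lemma mem_extClass_shiftSet_one_iff {N : C} :
    N ∈ extClass 𝒳 (shiftSet 𝒴 (1:ℤ)) ↔ ∃ (M D : C) (f : M ⟶ D) (g : D ⟶ N)
      (h : N ⟶ M⟦(1:ℤ)⟧), M ∈ 𝒴 ∧ D ∈ 𝒳 ∧ Triangle.mk f g h ∈ distTriang C := by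
  constructor
  · rintro ⟨D, B, g, k, l, hD, ⟨M, hM, ⟨e⟩⟩, hT⟩
    let f := -(shiftFunctor C (1:ℤ)).preimage (e.hom ≫ l)
    have hf : -f⟦(1:ℤ)⟧' = e.hom ≫ l := by rw [Functor.map_neg, neg_neg, Functor.map_preimage]
    refine ⟨M, D, f, g, k ≫ e.inv, hM, hD, (rotate_distinguished_triangle _).2 ?_⟩
    change Triangle.mk g (k ≫ e.inv) (-f⟦(1:ℤ)⟧') ∈ distTriang C
    rw [hf]
    exact distTriang_mk_of_iso₃ hT e.symm
  · rintro ⟨M, D, f, g, h, hM, hD, hT⟩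
    exact ⟨D, M⟦(1:ℤ)⟧, g, h, -f⟦(1:ℤ)⟧', hD, ⟨M, hM, ⟨Iso.refl _⟩⟩, rot_of_distTriang _ hT⟩

lemma mem_extClass_shiftSet_neg_one_iff {X : C} :
    X ∈ extClass (shiftSet 𝒳 (-1:ℤ)) 𝒴 ↔ ∃ (D N : C) (f : X ⟶ D) (g : D ⟶ N)
      (h : N ⟶ X⟦(1:ℤ)⟧), D ∈ 𝒴 ∧ N ∈ 𝒳 ∧ Triangle.mk f g h ∈ distTriang C := by
  constructor
  · rintro ⟨A, D, f, g, h, ⟨N, hN, ⟨e⟩⟩, hD, hT⟩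
    let ε : A⟦(1:ℤ)⟧ ≅ N := (shiftFunctor C (1:ℤ)).mapIso e.symm ≪≫ shiftNegShift N 1
    exact ⟨D, N, g, h ≫ ε.hom, ε.inv ≫ (-f⟦(1:ℤ)⟧'), hD, hN,
      distTriang_mk_of_iso₃ (rot_of_distTriang _ hT) ε⟩
  · rintro ⟨D, N, f, g, h, hD, hN, hT⟩
    exact ⟨N⟦(-1:ℤ)⟧, D, _, f, _, ⟨N, hN, ⟨Iso.refl _⟩⟩, hD, inv_rot_of_distTriang _ hT⟩

end Subcategories

section Approximations

variable {𝒟 : Set C}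

lemma isRightApprox_of_distTriang {M D N : C} {f : M ⟶ D} {g : D ⟶ N} {h : N ⟶ M⟦(1:ℤ)⟧}
    (hT : Triangle.mk f g h ∈ distTriang C) (hM : M ∈ shiftRightPerp 𝒟) :
    IsRightApprox 𝒟 g := fun D' hD' φ =>
  let ⟨ψ, hψ⟩ := Triangle.coyoneda_exact₃ _ hT φ (mem_shiftRightPerp_iff.1 hM D' hD' _)
  ⟨ψ, hψ.symm⟩

lemma isLeftApprox_of_distTriang {M D N : C} {f : M ⟶ D} {g : D ⟶ N} {h : N ⟶ M⟦(1:ℤ)⟧}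
    (hT : Triangle.mk f g h ∈ distTriang C) (hN : N ∈ leftPerpShift 𝒟) :
    IsLeftApprox 𝒟 f := fun D' hD' φ =>
  let ⟨ψ, hψ⟩ := Triangle.yoneda_exact₁ hT φ (hN D' hD' _)
  ⟨ψ, hψ.symm⟩

lemma nonempty_retract_of_isRightApprox {X D N M D' : C}
    {f : X ⟶ D} {g : D ⟶ N} {h : N ⟶ X⟦(1:ℤ)⟧} {f' : M ⟶ D'} {g' : D' ⟶ N} {h' : N ⟶ M⟦(1:ℤ)⟧}
    (hT : Triangle.mk f g h ∈ distTriang C) (hT' : Triangle.mk f' g' h' ∈ distTriang C)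
    (hD : D ∈ 𝒟) (hD' : D' ∈ 𝒟) (hg : IsRightApprox 𝒟 g) (hg' : IsRightApprox 𝒟 g') :
    Nonempty (Retract X (M ⊞ D)) := by
  obtain ⟨u, hu⟩ := hg' D hD g
  obtain ⟨v, hv⟩ := hg D' hD' g'
  obtain ⟨s, -, hs⟩ := complete_distinguished_triangle_morphism₁ _ _ hT hT' u (𝟙 N)
    (by dsimp only [Triangle.mk]; rw [Category.comp_id, hu])
  obtain ⟨t, -, ht⟩ := complete_distinguished_triangle_morphism₁ _ _ hT' hT v (𝟙 N)
    (by dsimp only [Triangle.mk]; rw [Category.comp_id, hv])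
  dsimp only [Triangle.mk] at s hs t ht
  rw [Category.id_comp] at hs ht
  -- `s ≫ t` agrees with `𝟙 X` after `h`, so their difference factors through `f`
  obtain ⟨ρ, hρ⟩ := Triangle.yoneda_exact₁ hT (s ≫ t - 𝟙 X) (by
    rw [Functor.map_sub, Functor.map_comp, comp_sub, reassoc_of% hs, ht,
      CategoryTheory.Functor.map_id, Category.comp_id, sub_self])
  exact ⟨⟨biprod.lift s f, biprod.desc t (-ρ), by simp [← hρ]⟩⟩

lemma nonempty_retract_of_isLeftApprox {M D N D' N' : C}
    {f : M ⟶ D} {g : D ⟶ N} {h : N ⟶ M⟦(1:ℤ)⟧} {f' : M ⟶ D'} {g' : D' ⟶ N'} {h' : N' ⟶ M⟦(1:ℤ)⟧}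
    (hT : Triangle.mk f g h ∈ distTriang C) (hT' : Triangle.mk f' g' h' ∈ distTriang C)
    (hD : D ∈ 𝒟) (hD' : D' ∈ 𝒟) (hf : IsLeftApprox 𝒟 f) (hf' : IsLeftApprox 𝒟 f') :
    Nonempty (Retract N (N' ⊞ D)) := by
  obtain ⟨u, hu⟩ := hf D' hD' f'
  obtain ⟨v, hv⟩ := hf' D hD f
  obtain ⟨s, -, hs⟩ := complete_distinguished_triangle_morphism _ _ hT hT' (𝟙 M) u
    (by dsimp only [Triangle.mk]; rw [Category.id_comp, hu])
  obtain ⟨t, -, ht⟩ := complete_distinguished_triangle_morphism _ _ hT' hT (𝟙 M) v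
    (by dsimp only [Triangle.mk]; rw [Category.id_comp, hv])
  dsimp only [Triangle.mk] at s hs t ht
  rw [CategoryTheory.Functor.map_id, Category.comp_id] at hs ht
  obtain ⟨ρ, hρ⟩ := Triangle.coyoneda_exact₃ _ hT (s ≫ t - 𝟙 N) (by
    change (s ≫ t - 𝟙 N) ≫ h = 0
    rw [sub_comp, Category.assoc, ← ht, ← hs, Category.id_comp, sub_self])
  dsimp only [Triangle.mk] at ρ hρ
  exact ⟨⟨biprod.lift s ρ, biprod.desc t (-g), by simp [← hρ]⟩⟩

lemma mem_leftPerpShift_of_isLeftApprox {M D N : C} {f : M ⟶ D} {g : D ⟶ N}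
    {h : N ⟶ M⟦(1:ℤ)⟧} (hT : Triangle.mk f g h ∈ distTriang C) (hf : IsLeftApprox 𝒟 f)
    (hD : D ∈ leftPerpShift 𝒟) : N ∈ leftPerpShift 𝒟 := by
  intro D' hD' φ
  obtain ⟨ψ, hψ⟩ := Triangle.yoneda_exact₃ _ hT φ (hD D' hD' _)
  dsimp only [Triangle.mk] at ψ hψ
  obtain ⟨χ, hχ⟩ := hf D' hD' ((shiftFunctor C (1:ℤ)).preimage ψ)
  have hψχ : ψ = f⟦(1:ℤ)⟧' ≫ χ⟦(1:ℤ)⟧' := by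
    rw [← Functor.map_comp, hχ, Functor.map_preimage]
  have hhf : h ≫ f⟦(1:ℤ)⟧' = 0 := comp_distTriang_mor_zero₃₁ _ hT
  rw [hψ, hψχ, reassoc_of% hhf, zero_comp]

lemma mem_shiftRightPerp_of_isRightApprox {X D N : C} {f : X ⟶ D} {g : D ⟶ N}
    {h : N ⟶ X⟦(1:ℤ)⟧} (hT : Triangle.mk f g h ∈ distTriang C) (hg : IsRightApprox 𝒟 g)
    (hD : D ∈ shiftRightPerp 𝒟) : X ∈ shiftRightPerp 𝒟 := by
  rw [mem_shiftRightPerp_iff] at hD ⊢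
  intro D' hD' φ
  obtain ⟨ψ, hψ⟩ := Triangle.coyoneda_exact₁ _ hT φ (hD D' hD' _)
  dsimp only [Triangle.mk] at ψ hψ
  obtain ⟨χ, hχ⟩ := hg D' hD' ψ
  have hgh : g ≫ h = 0 := comp_distTriang_mor_zero₂₃ _ hT
  rw [hψ, ← hχ, Category.assoc, hgh, comp_zero]

end Approximations

section MuInv

variable {𝒟 ℳ : Set C}

lemma mem_extClass_shiftSet_one_of_biprod (h𝒟 : IsSubcat 𝒟) (hℳ : IsSubcat ℳ) (h𝒟ℳ : 𝒟 ⊆ ℳ)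
    (hℳ𝒟 : ℳ ⊆ shiftRightPerp 𝒟) {P Q : C} (hPQ : (P ⊞ Q) ∈ extClass 𝒟 (shiftSet ℳ (1:ℤ))) :
    P ∈ extClass 𝒟 (shiftSet ℳ (1:ℤ)) := by
  obtain ⟨M, D, f, g, h, hM, hD, hT⟩ := mem_extClass_shiftSet_one_iff.1 hPQ
  have hg : IsRightApprox 𝒟 g := isRightApprox_of_distTriang hT (hℳ𝒟 hM)
  obtain ⟨F₁, f₁, h₁, hT₁⟩ := distinguished_cocone_triangle₁ (g ≫ biprod.fst)
  obtain ⟨F₂, f₂, h₂, hT₂⟩ := distinguished_cocone_triangle₁ (g ≫ biprod.snd)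
  obtain ⟨k, hT₁₂⟩ := biprod_distTriang hT₁ hT₂
  have hg₁₂ : IsRightApprox 𝒟 (biprod.map (g ≫ biprod.fst) (g ≫ biprod.snd)) :=
    IsRightApprox.of_comp (u := biprod.lift (𝟙 D) (𝟙 D)) (by convert hg using 1; ext <;> simp)
  obtain ⟨e⟩ := nonempty_retract_of_isRightApprox hT₁₂ hT (h𝒟.biprod_mem hD hD) hD hg₁₂ hg
  have hF : (F₁ ⊞ F₂) ∈ ℳ :=
    hℳ.mem_of_retract e (hℳ.biprod_mem hM (h𝒟ℳ (h𝒟.biprod_mem hD hD)))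
  exact mem_extClass_shiftSet_one_iff.2 ⟨F₁, D, f₁, _, h₁, (hℳ.mem_of_biprod hF).1, hD, hT₁⟩

lemma isSubcat_muInv (h𝒟 : IsSubcat 𝒟) (hℳ : IsSubcat ℳ) (h𝒟ℳ : 𝒟 ⊆ ℳ)
    (hℳ𝒟 : ℳ ⊆ shiftRightPerp 𝒟) : IsSubcat (muInv ℳ 𝒟) where
  mem_of_iso _ _ e hN :=
    ⟨extClass_mem_of_iso e hN.1, (isSubcat_leftPerpShift 𝒟).mem_of_iso e hN.2⟩
  biprod_mem _ _ hN₁ hN₂ :=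
    ⟨extClass_biprod_mem h𝒟.biprod_mem (shiftSet_biprod_mem hℳ.biprod_mem) hN₁.1 hN₂.1,
      (isSubcat_leftPerpShift 𝒟).biprod_mem hN₁.2 hN₂.2⟩
  mem_of_biprod P Q hPQ :=
    have hQP := extClass_mem_of_iso (biprod.braiding P Q) hPQ.1
    ⟨⟨mem_extClass_shiftSet_one_of_biprod h𝒟 hℳ h𝒟ℳ hℳ𝒟 hPQ.1,
        ((isSubcat_leftPerpShift 𝒟).mem_of_biprod hPQ.2).1⟩,
      ⟨mem_extClass_shiftSet_one_of_biprod h𝒟 hℳ h𝒟ℳ hℳ𝒟 hQP,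
        ((isSubcat_leftPerpShift 𝒟).mem_of_biprod hPQ.2).2⟩⟩

lemma subset_muInv (hℳ : IsSubcat ℳ) (h𝒟ℳ : 𝒟 ⊆ ℳ) (h𝒟 : 𝒟 ⊆ leftPerpShift 𝒟) :
    𝒟 ⊆ muInv ℳ 𝒟 := fun D hD =>
  ⟨mem_extClass_shiftSet_one_iff.2 ⟨0, D, 0, 𝟙 D, 0, hℳ.zero_mem (h𝒟ℳ hD), hD,
    contractible_distinguished₁ D⟩, h𝒟 hD⟩

lemma muInv_subset (hℳ𝒟 : ℳ ⊆ shiftRightPerp 𝒟) :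
    muInv ℳ 𝒟 ⊆ {A : C | HasRightApprox 𝒟 A} ∩ leftPerpShift 𝒟 := fun N hN => by
  obtain ⟨M, D, f, g, h, hM, hD, hT⟩ := mem_extClass_shiftSet_one_iff.1 hN.1
  exact ⟨⟨D, hD, g, isRightApprox_of_distTriang hT (hℳ𝒟 hM)⟩, hN.2⟩

lemma mu_muInv (hℳ : IsSubcat ℳ) (h𝒟ℳ : 𝒟 ⊆ ℳ)
    (hℳ𝒟 : ℳ ⊆ {A : C | HasLeftApprox 𝒟 A} ∩ shiftRightPerp 𝒟) (h𝒟 : 𝒟 ⊆ leftPerpShift 𝒟) :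
    mu (muInv ℳ 𝒟) 𝒟 = ℳ := by
  refine Set.Subset.antisymm (fun X hX => ?_) (fun M hM => ?_)
  · obtain ⟨D, N, f, g, h, hD, hN, hT⟩ := mem_extClass_shiftSet_neg_one_iff.1 hX.1
    obtain ⟨M, D', f', g', h', hM, hD', hT'⟩ := mem_extClass_shiftSet_one_iff.1 hN.1
    obtain ⟨e⟩ := nonempty_retract_of_isRightApprox hT hT' hD hD'
      (isRightApprox_of_distTriang hT hX.2) (isRightApprox_of_distTriang hT' (hℳ𝒟 hM).2)
    exact hℳ.mem_of_retract e (hℳ.biprod_mem hM (h𝒟ℳ hD))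
  · obtain ⟨D, hD, f, hf⟩ := (hℳ𝒟 hM).1
    obtain ⟨N, g, h, hT⟩ := distinguished_cocone_triangle f
    have hN : N ∈ muInv ℳ 𝒟 := ⟨mem_extClass_shiftSet_one_iff.2 ⟨M, D, f, g, h, hM, hD, hT⟩,
      mem_leftPerpShift_of_isLeftApprox hT hf (h𝒟 hD)⟩
    exact ⟨mem_extClass_shiftSet_neg_one_iff.2 ⟨D, N, f, g, h, hD, hN, hT⟩, (hℳ𝒟 hM).2⟩

end MuInv

section Mu

variable {𝒟 𝒩 : Set C}

lemma mem_extClass_shiftSet_neg_one_of_biprod (h𝒟 : IsSubcat 𝒟) (h𝒩 : IsSubcat 𝒩)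
    (h𝒟𝒩 : 𝒟 ⊆ 𝒩) (h𝒩𝒟 : 𝒩 ⊆ leftPerpShift 𝒟) {P Q : C}
    (hPQ : (P ⊞ Q) ∈ extClass (shiftSet 𝒩 (-1:ℤ)) 𝒟) : P ∈ extClass (shiftSet 𝒩 (-1:ℤ)) 𝒟 := by
  obtain ⟨D, N, f, g, h, hD, hN, hT⟩ := mem_extClass_shiftSet_neg_one_iff.1 hPQ
  have hf : IsLeftApprox 𝒟 f := isLeftApprox_of_distTriang hT (h𝒩𝒟 hN)
  obtain ⟨N₁, g₁, h₁, hT₁⟩ := distinguished_cocone_triangle (biprod.inl ≫ f)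
  obtain ⟨N₂, g₂, h₂, hT₂⟩ := distinguished_cocone_triangle (biprod.inr ≫ f)
  obtain ⟨k, hT₁₂⟩ := biprod_distTriang hT₁ hT₂
  have hf₁₂ : IsLeftApprox 𝒟 (biprod.map (biprod.inl ≫ f) (biprod.inr ≫ f)) :=
    IsLeftApprox.of_comp (u := biprod.desc (𝟙 D) (𝟙 D)) (by convert hf using 1; ext <;> simp)
  obtain ⟨e⟩ := nonempty_retract_of_isLeftApprox hT₁₂ hT (h𝒟.biprod_mem hD hD) hD hf₁₂ hf
  have hN₁₂ : (N₁ ⊞ N₂) ∈ 𝒩 :=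
    h𝒩.mem_of_retract e (h𝒩.biprod_mem hN (h𝒟𝒩 (h𝒟.biprod_mem hD hD)))
  exact mem_extClass_shiftSet_neg_one_iff.2
    ⟨D, N₁, _, g₁, h₁, hD, (h𝒩.mem_of_biprod hN₁₂).1, hT₁⟩

lemma isSubcat_mu (h𝒟 : IsSubcat 𝒟) (h𝒩 : IsSubcat 𝒩) (h𝒟𝒩 : 𝒟 ⊆ 𝒩)
    (h𝒩𝒟 : 𝒩 ⊆ leftPerpShift 𝒟) : IsSubcat (mu 𝒩 𝒟) where
  mem_of_iso _ _ e hX :=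
    ⟨extClass_mem_of_iso e hX.1, (isSubcat_shiftRightPerp 𝒟).mem_of_iso e hX.2⟩
  biprod_mem _ _ hX₁ hX₂ :=
    ⟨extClass_biprod_mem (shiftSet_biprod_mem h𝒩.biprod_mem) h𝒟.biprod_mem hX₁.1 hX₂.1,
      (isSubcat_shiftRightPerp 𝒟).biprod_mem hX₁.2 hX₂.2⟩
  mem_of_biprod P Q hPQ :=
    have hQP := extClass_mem_of_iso (biprod.braiding P Q) hPQ.1
    ⟨⟨mem_extClass_shiftSet_neg_one_of_biprod h𝒟 h𝒩 h𝒟𝒩 h𝒩𝒟 hPQ.1,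
        ((isSubcat_shiftRightPerp 𝒟).mem_of_biprod hPQ.2).1⟩,
      ⟨mem_extClass_shiftSet_neg_one_of_biprod h𝒟 h𝒩 h𝒟𝒩 h𝒩𝒟 hQP,
        ((isSubcat_shiftRightPerp 𝒟).mem_of_biprod hPQ.2).2⟩⟩

lemma subset_mu (h𝒩 : IsSubcat 𝒩) (h𝒟𝒩 : 𝒟 ⊆ 𝒩) (h𝒟 : 𝒟 ⊆ shiftRightPerp 𝒟) :
    𝒟 ⊆ mu 𝒩 𝒟 := fun D hD =>
  ⟨mem_extClass_shiftSet_neg_one_iff.2 ⟨D, 0, 𝟙 D, 0, 0, hD, h𝒩.zero_mem (h𝒟𝒩 hD),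
    contractible_distinguished D⟩, h𝒟 hD⟩

lemma mu_subset (h𝒩𝒟 : 𝒩 ⊆ leftPerpShift 𝒟) :
    mu 𝒩 𝒟 ⊆ {A : C | HasLeftApprox 𝒟 A} ∩ shiftRightPerp 𝒟 := fun X hX => by
  obtain ⟨D, N, f, g, h, hD, hN, hT⟩ := mem_extClass_shiftSet_neg_one_iff.1 hX.1
  exact ⟨⟨D, hD, f, isLeftApprox_of_distTriang hT (h𝒩𝒟 hN)⟩, hX.2⟩

lemma muInv_mu (h𝒩 : IsSubcat 𝒩) (h𝒟𝒩 : 𝒟 ⊆ 𝒩)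
    (h𝒩𝒟 : 𝒩 ⊆ {A : C | HasRightApprox 𝒟 A} ∩ leftPerpShift 𝒟) (h𝒟 : 𝒟 ⊆ shiftRightPerp 𝒟) :
    muInv (mu 𝒩 𝒟) 𝒟 = 𝒩 := by
  refine Set.Subset.antisymm (fun N hN => ?_) (fun N hN => ?_)
  · obtain ⟨X, D, f, g, h, hX, hD, hT⟩ := mem_extClass_shiftSet_one_iff.1 hN.1
    obtain ⟨D', N', f', g', h', hD', hN', hT'⟩ := mem_extClass_shiftSet_neg_one_iff.1 hX.1
    obtain ⟨e⟩ := nonempty_retract_of_isLeftApprox hT hT' hD hD'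
      (isLeftApprox_of_distTriang hT hN.2) (isLeftApprox_of_distTriang hT' (h𝒩𝒟 hN').2)
    exact h𝒩.mem_of_retract e (h𝒩.biprod_mem hN' (h𝒟𝒩 hD))
  · obtain ⟨D, hD, g, hg⟩ := (h𝒩𝒟 hN).1
    obtain ⟨X, f, h, hT⟩ := distinguished_cocone_triangle₁ g
    have hX : X ∈ mu 𝒩 𝒟 := ⟨mem_extClass_shiftSet_neg_one_iff.2 ⟨D, N, f, g, h, hD, hN, hT⟩,
      mem_shiftRightPerp_of_isRightApprox hT hg (h𝒟 hD)⟩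
    exact ⟨mem_extClass_shiftSet_one_iff.2 ⟨X, D, f, g, h, hX, hD, hT⟩, (h𝒩𝒟 hN).2⟩

end Mu

/-- Iyama–Yoshino: for a rigid subcategory `𝒟`, `ℳ ↦ μ⁻¹(ℳ;𝒟)` is a
bijection between subcategories `ℳ` with `𝒟 ⊆ ℳ ⊆ 𝒟̌ ∩ (𝒟[-1])⊥` and subcategories
`𝒩` with `𝒟 ⊆ 𝒩 ⊆ 𝒟̂ ∩ ⊥(𝒟[1])`, with inverse `𝒩 ↦ μ(𝒩;𝒟)`. -/
theorem stmt5 (𝒟 : Set C) (hD : IsSubcat 𝒟)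
    (hrigid : homZero 𝒟 (shiftSet 𝒟 (1:ℤ))) :
    (∀ ℳ : Set C, IsSubcat ℳ → 𝒟 ⊆ ℳ →
      ℳ ⊆ {A : C | HasLeftApprox 𝒟 A} ∩ shiftRightPerp 𝒟 →
        IsSubcat (muInv ℳ 𝒟) ∧ 𝒟 ⊆ muInv ℳ 𝒟 ∧
        muInv ℳ 𝒟 ⊆ {A : C | HasRightApprox 𝒟 A} ∩ leftPerpShift 𝒟 ∧
        mu (muInv ℳ 𝒟) 𝒟 = ℳ) ∧
    (∀ 𝒩 : Set C, IsSubcat 𝒩 → 𝒟 ⊆ 𝒩 →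
      𝒩 ⊆ {A : C | HasRightApprox 𝒟 A} ∩ leftPerpShift 𝒟 →
        IsSubcat (mu 𝒩 𝒟) ∧ 𝒟 ⊆ mu 𝒩 𝒟 ∧
        mu 𝒩 𝒟 ⊆ {A : C | HasLeftApprox 𝒟 A} ∩ shiftRightPerp 𝒟 ∧
        muInv (mu 𝒩 𝒟) 𝒟 = 𝒩) := by
  have h𝒟₁ : 𝒟 ⊆ leftPerpShift 𝒟 := subset_leftPerpShift_of_homZero hrigid
  have h𝒟₂ : 𝒟 ⊆ shiftRightPerp 𝒟 := subset_shiftRightPerp_of_homZero hrigid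
  refine ⟨fun ℳ hℳ h𝒟ℳ hℳ𝒟 => ?_, fun 𝒩 h𝒩 h𝒟𝒩 h𝒩𝒟 => ?_⟩
  · have hℳ' : ℳ ⊆ shiftRightPerp 𝒟 := fun _ hM => (hℳ𝒟 hM).2
    exact ⟨isSubcat_muInv hD hℳ h𝒟ℳ hℳ', subset_muInv hℳ h𝒟ℳ h𝒟₁, muInv_subset hℳ',
      mu_muInv hℳ h𝒟ℳ hℳ𝒟 h𝒟₁⟩
  · have h𝒩' : 𝒩 ⊆ leftPerpShift 𝒟 := fun _ hN => (h𝒩𝒟 hN).2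
    exact ⟨isSubcat_mu hD h𝒩 h𝒟𝒩 h𝒩', subset_mu h𝒩 h𝒟𝒩 h𝒟₂, mu_subset h𝒩',
      muInv_mu h𝒩 h𝒟𝒩 h𝒩𝒟 h𝒟₂⟩
end

section
/- Let C be a triangulated category, D a subcategory, and X an object of C with Hom(X,D'[1])=0 for all D' in D. Suppose W → D_W →(g)→ Z → W[1] is a distinguished triangle in C with D_W in D and g a right D-approximation of Z. Then Hom_C(X,W[1])=0 if and only if every morphism X → Z factors through an object of D. -/
/-!
Applying `Hom(X, -)` to the triangle gives the exact sequence
`Hom(X, D_W) → Hom(X, Z) → Hom(X, W[1]) → Hom(X, D_W[1]) = 0`, so `Hom(X, W[1])` is the cokernel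
of composition with `g`. Since `g` is a right `𝒟`-approximation, the image of that map is exactly
the set of morphisms `X → Z` factoring through `𝒟`.
-/

open CategoryTheory CategoryTheory.Limits CategoryTheory.Pretriangulated

variable {C : Type*} [Category C] [Preadditive C] [HasZeroObject C]
  [HasShift C ℤ] [∀ n : ℤ, (shiftFunctor C n).Additive] [Pretriangulated C]

lemma comp_mor₃_eq_zero_of_factors_through_approx {𝒟 : Set C} {X W D D' Z : C}
    {f : W ⟶ D} {g : D ⟶ Z} {h : Z ⟶ W⟦(1:ℤ)⟧} (htri : Triangle.mk f g h ∈ distTriang C)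
    (happrox : ∀ D' ∈ 𝒟, ∀ u : D' ⟶ Z, ∃ v : D' ⟶ D, v ≫ g = u)
    (hD' : D' ∈ 𝒟) (u : X ⟶ D') (v : D' ⟶ Z) :
    (u ≫ v) ≫ h = 0 := by
  obtain ⟨w, rfl⟩ := happrox D' hD' v
  have hgh : g ≫ h = 0 := comp_distTriang_mor_zero₂₃ _ htri
  simp only [Category.assoc, hgh, comp_zero]

theorem stmt7_general (𝒟 : Set C) (X W DW Z : C)
    (hX : ∀ D' ∈ 𝒟, ∀ f : X ⟶ (D'⟦(1:ℤ)⟧), f = 0)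
    (f : W ⟶ DW) (g : DW ⟶ Z) (h : Z ⟶ (W⟦(1:ℤ)⟧))
    (hDW : DW ∈ 𝒟)
    (htri : Triangle.mk f g h ∈ distTriang C)
    (happrox : ∀ D' ∈ 𝒟, ∀ u : D' ⟶ Z, ∃ v : D' ⟶ DW, v ≫ g = u) :
    (∀ φ : X ⟶ (W⟦(1:ℤ)⟧), φ = 0) ↔
      (∀ φ : X ⟶ Z, ∃ (D' : C) (_ : D' ∈ 𝒟) (u : X ⟶ D') (v : D' ⟶ Z), u ≫ v = φ) := by
  constructor
  · intro hW φ
    obtain ⟨u, hu⟩ := Triangle.coyoneda_exact₃ _ htri φ (hW _)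
    exact ⟨DW, hDW, u, g, hu.symm⟩
  · intro hfac φ
    obtain ⟨ψ, rfl⟩ := Triangle.coyoneda_exact₁ _ htri φ (hX DW hDW _)
    obtain ⟨D', hD', u, v, rfl⟩ := hfac ψ
    exact comp_mor₃_eq_zero_of_factors_through_approx htri happrox hD' u v

/-- Lemma 3.4: given `X` with `Hom(X,𝒟[1]) = 0` and a triangle
`W → D_W → Z → W[1]` with `D_W ∈ 𝒟` and `D_W → Z` a right `𝒟`-approximation,
`Hom(X,W[1]) = 0` iff every morphism `X → Z` factors through an object of `𝒟`. -/
theorem stmt7 (𝒟 : Set C) (hD : IsSubcat 𝒟) (X W DW Z : C)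
    (hX : ∀ D' ∈ 𝒟, ∀ f : X ⟶ (D'⟦(1:ℤ)⟧), f = 0)
    (f : W ⟶ DW) (g : DW ⟶ Z) (h : Z ⟶ (W⟦(1:ℤ)⟧))
    (hDW : DW ∈ 𝒟)
    (htri : Triangle.mk f g h ∈ distTriang C)
    (happrox : ∀ D' ∈ 𝒟, ∀ u : D' ⟶ Z, ∃ v : D' ⟶ DW, v ≫ g = u) :
    (∀ φ : X ⟶ (W⟦(1:ℤ)⟧), φ = 0) ↔
      (∀ φ : X ⟶ Z, ∃ (D' : C) (_ : D' ∈ 𝒟) (u : X ⟶ D') (v : D' ⟶ Z), u ≫ v = φ) :=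
  stmt7_general 𝒟 X W DW Z hX f g h hDW htri happrox
end

section
/- Let C be a Hom-finite, Krull–Schmidt, k-linear triangulated category, (X,Y) a t-structure in C, and D a subcategory satisfying condition (RF) with D ⊆ X ⊆ (D[-1])⊥. Then D consists only of zero objects, and the D-mutation (μ⁻¹(X;D), μ⁻¹(Y;D[1])) equals (X[1], Y[1]); in particular it is again a t-structure. Thus the only possible mutation of a t-structure is its shift. -/
/-! Since `𝒳[1] ⊆ 𝒳 ⊆ (𝒟[-1])⊥ = ⊥(𝒟[1])`, every `D ∈ 𝒟` has `D[1] ∈ ⊥(𝒟[1])`; hence the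
identity of `D[1]` vanishes and `D = 0`. Mutation with respect to a zero subcategory is just the
shift, and the shift of a t-structure is again a t-structure. -/


open CategoryTheory CategoryTheory.Limits CategoryTheory.Pretriangulated

variable {C : Type*} [Category C] [Preadditive C] [HasZeroObject C]
  [HasShift C ℤ] [∀ n : ℤ, (shiftFunctor C n).Additive] [Pretriangulated C]

section

variable {C : Type*} [Category C] [HasShift C ℤ]

lemma mem_shiftSet {𝒳 : Set C} {A : C} (hA : A ∈ 𝒳) (n : ℤ) : A⟦n⟧ ∈ shiftSet 𝒳 n :=
  ⟨A, hA, ⟨Iso.refl _⟩⟩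

lemma shiftSet_mono {𝒳 𝒴 : Set C} (h : 𝒳 ⊆ 𝒴) (n : ℤ) : shiftSet 𝒳 n ⊆ shiftSet 𝒴 n :=
  fun _ ⟨A, hA, e⟩ => ⟨A, h hA, e⟩

lemma mem_shiftSet_of_iso {𝒳 : Set C} {n : ℤ} {Z Z' : C} (e : Z ≅ Z')
    (hZ : Z ∈ shiftSet 𝒳 n) : Z' ∈ shiftSet 𝒳 n :=
  let ⟨A, hA, ⟨e'⟩⟩ := hZ
  ⟨A, hA, ⟨e'.trans e⟩⟩

end

section

variable {C : Type*} [Category C] [Preadditive C] [HasShift C ℤ]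
  [∀ n : ℤ, (shiftFunctor C n).Additive]

lemma isZero_of_mem_shiftSet {𝒟 : Set C} (hz : ∀ D ∈ 𝒟, IsZero D) {n : ℤ} {Z : C}
    (hZ : Z ∈ shiftSet 𝒟 n) : IsZero Z :=
  let ⟨D, hD, ⟨e⟩⟩ := hZ
  ((shiftFunctor C n).map_isZero (hz D hD)).of_iso e.symm

lemma isZero_of_shift_mem_leftPerpShift {𝒟 : Set C} {D : C} (hD : D ∈ 𝒟)
    (h : D⟦(1:ℤ)⟧ ∈ leftPerpShift 𝒟) : IsZero D := by
  rw [IsZero.iff_id_eq_zero, ← (shiftFunctor C (1:ℤ)).map_eq_zero_iff,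
    CategoryTheory.Functor.map_id]
  exact h D hD _

lemma leftPerpShift_eq_univ_of_isZero {𝒟 : Set C} (hz : ∀ D ∈ 𝒟, IsZero D) :
    leftPerpShift 𝒟 = Set.univ :=
  Set.eq_univ_of_forall fun _ D hD _ =>
    ((shiftFunctor C (1:ℤ)).map_isZero (hz D hD)).eq_of_tgt _ _

lemma homZero_shiftSet {𝒳 𝒴 : Set C} (h : homZero 𝒳 𝒴) (n : ℤ) :
    homZero (shiftSet 𝒳 n) (shiftSet 𝒴 n) := by
  rintro _ _ ⟨A, hA, ⟨eA⟩⟩ ⟨B, hB, ⟨eB⟩⟩ f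
  have hpre := (shiftFunctor C n).map_preimage (eA.hom ≫ f ≫ eB.inv)
  rw [h hA hB ((shiftFunctor C n).preimage _), CategoryTheory.Functor.map_zero] at hpre
  simpa using congrArg (fun g => eA.inv ≫ g ≫ eB.hom) hpre.symm

end

lemma extClass_eq_of_isZero {𝒟 𝒴 : Set C} (hne : 𝒟.Nonempty) (hz : ∀ D ∈ 𝒟, IsZero D)
    (hiso : ∀ ⦃B Z : C⦄, (B ≅ Z) → B ∈ 𝒴 → Z ∈ 𝒴) : extClass 𝒟 𝒴 = 𝒴 := by
  ext Z
  constructor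
  · rintro ⟨A, B, _, g, _, hA, hB, hT⟩
    have : IsIso g := (Triangle.isZero₁_iff_isIso₂ _ hT).1 (hz A hA)
    exact hiso (asIso g).symm hB
  · intro hZ
    obtain ⟨D, hD⟩ := hne
    refine ⟨D, Z, 0, 𝟙 Z, 0, hD, hZ,
      isomorphic_distinguished _ (contractible_distinguished₁ Z) _ ?_⟩
    exact Triangle.isoMk _ _ (hz D hD).isoZero (Iso.refl Z) (Iso.refl Z)
      (by simp [Triangle.mk]) (by simp [Triangle.mk]) (by simp [Triangle.mk])

lemma muInv_eq_shiftSet_of_isZero {ℳ 𝒟 : Set C} (hne : 𝒟.Nonempty) (hz : ∀ D ∈ 𝒟, IsZero D) :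
    muInv ℳ 𝒟 = shiftSet ℳ (1:ℤ) := by
  rw [muInv, extClass_eq_of_isZero hne hz fun _ _ => mem_shiftSet_of_iso,
    leftPerpShift_eq_univ_of_isZero hz, Set.inter_univ]

lemma mem_extClass_of_iso {𝒳 𝒴 : Set C} {Z Z' : C} (e : Z ≅ Z')
    (hZ : Z ∈ extClass 𝒳 𝒴) : Z' ∈ extClass 𝒳 𝒴 := by
  obtain ⟨A, B, f, g, h, hA, hB, hT⟩ := hZ
  refine ⟨A, B, f ≫ e.hom, e.inv ≫ g, h, hA, hB, isomorphic_distinguished _ hT _ ?_⟩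
  exact Triangle.isoMk _ _ (Iso.refl A) e.symm (Iso.refl B) (by simp [Triangle.mk])
    (by simp [Triangle.mk]) (by simp [Triangle.mk])

lemma shift_mem_extClass_shiftSet {𝒳 𝒴 : Set C} {Z : C} (hZ : Z ∈ extClass 𝒳 𝒴) (n : ℤ) :
    Z⟦n⟧ ∈ extClass (shiftSet 𝒳 n) (shiftSet 𝒴 n) := by
  obtain ⟨A, B, _, _, _, hA, hB, hT⟩ := hZ
  exact ⟨_, _, _, _, _, mem_shiftSet hA n, mem_shiftSet hB n,
    Triangle.shift_distinguished _ hT n⟩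

lemma IsTorsionPair.shift {𝒳 𝒴 : Set C} (h : IsTorsionPair 𝒳 𝒴) (n : ℤ) :
    IsTorsionPair (shiftSet 𝒳 n) (shiftSet 𝒴 n) :=
  ⟨homZero_shiftSet h.1 n, fun Z =>
    mem_extClass_of_iso (shiftNegShift Z n) (shift_mem_extClass_shiftSet (h.2 (Z⟦-n⟧)) n)⟩

/-- if `(𝒳,𝒴)` is a t-structure and `𝒟` satisfies (RF) with
`𝒟 ⊆ 𝒳 ⊆ (𝒟[-1])⊥`, then `𝒟` consists of zero objects and the `𝒟`-mutation of
`(𝒳,𝒴)` is `(𝒳[1],𝒴[1])`, which is again a t-structure. -/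
theorem stmt11 (k : Type*) [Field k] [Linear k C]
    [∀ A B : C, Module.Finite k (A ⟶ B)] [IsIdempotentComplete C]
    (𝒳 𝒴 𝒟 : Set C) (hX : IsSubcat 𝒳) (hY : IsSubcat 𝒴) (hD : IsSubcat 𝒟)
    (hpair : IsTorsionPair 𝒳 𝒴)
    (ht : shiftSet 𝒳 (1:ℤ) ⊆ 𝒳)
    (hRF : RF 𝒟)
    (hDX : 𝒟 ⊆ 𝒳) (hXD : 𝒳 ⊆ shiftRightPerp 𝒟) :
    (∀ Z ∈ 𝒟, IsZero Z) ∧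
    muInv 𝒳 𝒟 = shiftSet 𝒳 (1:ℤ) ∧
    muInv 𝒴 (shiftSet 𝒟 (1:ℤ)) = shiftSet 𝒴 (1:ℤ) ∧
    IsTorsionPair (shiftSet 𝒳 (1:ℤ)) (shiftSet 𝒴 (1:ℤ)) ∧
    shiftSet (shiftSet 𝒳 (1:ℤ)) (1:ℤ) ⊆ shiftSet 𝒳 (1:ℤ) := by
  obtain ⟨hleft, -, -, hperp⟩ := hRF
  obtain ⟨Z, -⟩ := HasZeroObject.zero (C := C)
  obtain ⟨D₀, hD₀, -⟩ := hleft Z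
  have hz : ∀ D ∈ 𝒟, IsZero D := fun D hD =>
    isZero_of_shift_mem_leftPerpShift hD (hperp ▸ hXD (ht (mem_shiftSet (hDX hD) 1)))
  exact ⟨hz, muInv_eq_shiftSet_of_isZero ⟨D₀, hD₀⟩ hz,
    muInv_eq_shiftSet_of_isZero ⟨_, mem_shiftSet hD₀ 1⟩ fun _ => isZero_of_mem_shiftSet hz,
    hpair.shift 1, shiftSet_mono ht 1⟩
end
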